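/- Let l, m, a, b, c ∈ ℝ² with l ≠ m. Write o = midpoint(l, m) and ρ = dist(l, m)/2. Suppose b lies on the circle of center o and radius ρ (i.e. dist(b, o) = ρ) with b ≠ l and b ≠ m; suppose a and c lie in the closed disk of center o and radius ρ, with a ≠ b and c ≠ b. Assume that a and m lie on weakly opposite sides of the line through b and l, i.e. ⟨a − b, J(l − b)⟩ · ⟨m − b, J(l − b)⟩ ≤ 0, and that c and l lie on weakly opposite sides of the line through b and m, i.e. ⟨c − b, J(m − b)⟩ · ⟨l − b, J(m − b)⟩ ≤ 0. Then the unsigned angle ∠abc at b satisfies π/2 ≤ ∠abc < π. (This is the angle bound for three consecutive points a ≺ b ≺ c of a link, where b is the apex of a P-free quadrant supported by the points l and m.) -/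

import Mathlib

/-!
Translate `b` to the origin and put `p = l - b`, `q = m - b`. By Thales `p ⊥ q`, and for `u = a - b`
or `u = c - b` the disk condition `⟪x - l, x - m⟫ ≤ 0` becomes `‖u‖² ≤ ⟪u, p⟫ + ⟪u, q⟫`. In the plane
`q` is parallel to `J p` (and `p` to `J q`), so the side conditions say `⟪a - b, q⟫ ≤ 0` and
`⟪c - b, p⟫ ≤ 0`; the disk condition then forces `⟪a - b, p⟫ > 0` and `⟪c - b, q⟫ > 0`. Thus `a - b`
and `c - b` lie in opposite closed quadrants of the orthogonal frame `(p, q)`, whence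
`⟪a - b, c - b⟫ ≤ 0`; and both have positive inner product with `p + q`, so they are not antiparallel.
-/

open scoped RealInnerProductSpace

noncomputable section

/-- The Euclidean plane. -/
abbrev Plane := EuclideanSpace ℝ (Fin 2)

/-- Rotation of the plane by π/2: `J(x, y) = (−y, x)`. -/
def J (v : Plane) : Plane := WithLp.toLp 2 ![-(v 1), v 0]

open Real InnerProductGeometry

section InnerProductSpace

variable {F : Type*} [NormedAddCommGroup F] [InnerProductSpace ℝ F]

theorem real_inner_sub_sub_eq_dist_midpoint_sq_sub (x l m : F) :
    ⟪x - l, x - m⟫ = dist x (midpoint ℝ l m) ^ 2 - (dist l m / 2) ^ 2 := by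
  have hapollonius :=
    EuclideanGeometry.dist_sq_add_dist_sq_eq_two_mul_dist_midpoint_sq_add_half_dist_sq x l m
  have hsq := norm_sub_sq_real (x - l) (x - m)
  rw [sub_sub_sub_cancel_left, ← dist_eq_norm, ← dist_eq_norm, ← dist_eq_norm] at hsq
  rw [dist_comm m l] at hsq
  linarith

theorem real_inner_sub_sub_nonpos_of_dist_midpoint_le {x l m : F}
    (h : dist x (midpoint ℝ l m) ≤ dist l m / 2) : ⟪x - l, x - m⟫ ≤ 0 := by
  rw [real_inner_sub_sub_eq_dist_midpoint_sq_sub, sub_nonpos]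
  exact pow_le_pow_left₀ dist_nonneg h 2

theorem real_inner_sub_sub_eq_zero_of_dist_midpoint_eq {x l m : F}
    (h : dist x (midpoint ℝ l m) = dist l m / 2) : ⟪x - l, x - m⟫ = 0 := by
  rw [real_inner_sub_sub_eq_dist_midpoint_sq_sub, h, sub_self]

theorem pi_div_two_le_angle_of_real_inner_nonpos {u v : F} (h : ⟪u, v⟫ ≤ 0) :
    π / 2 ≤ angle u v := by
  rw [angle, arccos_eq_pi_div_two_sub_arcsin, le_sub_self_iff, arcsin_nonpos]
  exact div_nonpos_of_nonpos_of_nonneg h (by positivity)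

theorem angle_lt_pi_of_real_inner_pos {u v w : F} (hu : 0 < ⟪u, w⟫) (hv : 0 < ⟪v, w⟫) :
    angle u v < π := by
  refine (angle_le_pi u v).lt_of_ne fun hπ => ?_
  obtain ⟨-, r, hr, rfl⟩ := angle_eq_pi_iff.1 hπ
  rw [real_inner_smul_left] at hv
  nlinarith

theorem real_inner_self_le_of_dist_midpoint_le {x b l m : F}
    (hb : dist b (midpoint ℝ l m) = dist l m / 2) (hx : dist x (midpoint ℝ l m) ≤ dist l m / 2) :
    ⟪x - b, x - b⟫ ≤ ⟪x - b, l - b⟫ + ⟪x - b, m - b⟫ := by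
  have hxlm := real_inner_sub_sub_nonpos_of_dist_midpoint_le hx
  have hblm := real_inner_sub_sub_eq_zero_of_dist_midpoint_eq hb
  rw [← sub_sub_sub_cancel_right x l b, ← sub_sub_sub_cancel_right x m b] at hxlm
  rw [← inner_neg_neg, neg_sub, neg_sub] at hblm
  set u := x - b
  set p := l - b
  set q := m - b
  simp only [inner_sub_left, inner_sub_right, real_inner_comm u, hblm] at hxlm
  linarith

end InnerProductSpace

section Plane

theorem real_inner_mul_inner_self_eq_add_inner_J (x z y : Plane) :
    ⟪x, z⟫ * ⟪y, y⟫ = ⟪x, y⟫ * ⟪z, y⟫ + ⟪x, J y⟫ * ⟪z, J y⟫ := by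
  simp only [J, PiLp.inner_apply, RCLike.inner_apply, conj_trivial, Fin.sum_univ_two,
    Matrix.cons_val_zero, Matrix.cons_val_one]
  ring

/-- Expansion of `⟪x, y⟫` in the frame `p, q` through the inverse of its Gram matrix. -/
theorem real_inner_mul_gram_det_eq (x y p q : Plane) :
    ⟪x, y⟫ * (⟪p, p⟫ * ⟪q, q⟫ - ⟪p, q⟫ ^ 2) =
      ⟪x, p⟫ * ⟪y, p⟫ * ⟪q, q⟫ - ⟪p, q⟫ * (⟪x, p⟫ * ⟪y, q⟫ + ⟪x, q⟫ * ⟪y, p⟫) +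
        ⟪x, q⟫ * ⟪y, q⟫ * ⟪p, p⟫ := by
  simp only [PiLp.inner_apply, RCLike.inner_apply, conj_trivial, Fin.sum_univ_two]
  ring

theorem real_inner_nonpos_of_inner_J_mul_inner_J_nonpos {x p q : Plane} (hpq : ⟪p, q⟫ = 0)
    (hp : p ≠ 0) (h : ⟪x, J p⟫ * ⟪q, J p⟫ ≤ 0) : ⟪x, q⟫ ≤ 0 := by
  have hlagrange := real_inner_mul_inner_self_eq_add_inner_J x q p
  rw [real_inner_comm q p] at hpq
  rw [hpq, mul_zero, zero_add] at hlagrange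
  exact nonpos_of_mul_nonpos_left (hlagrange ▸ h) (real_inner_self_pos.2 hp)

theorem real_inner_nonpos_of_mem_opposite_quadrants {u v p q : Plane} (hpq : ⟪p, q⟫ = 0)
    (hp : p ≠ 0) (hq : q ≠ 0) (hup : 0 ≤ ⟪u, p⟫) (huq : ⟪u, q⟫ ≤ 0) (hvp : ⟪v, p⟫ ≤ 0)
    (hvq : 0 ≤ ⟪v, q⟫) : ⟪u, v⟫ ≤ 0 := by
  have hgram := real_inner_mul_gram_det_eq u v p q
  have hP := real_inner_self_pos.2 hp
  have hQ := real_inner_self_pos.2 hq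
  rw [hpq] at hgram
  refine nonpos_of_mul_nonpos_left ?_ (mul_pos hP hQ)
  nlinarith [mul_nonpos_of_nonneg_of_nonpos hup hvp, mul_nonpos_of_nonpos_of_nonneg huq hvq]

end Plane

theorem link_angle_bound_general (l m a b c : Plane)
    (o : Plane) (ho : o = midpoint ℝ l m) (ρ : ℝ) (hρ : ρ = dist l m / 2)
    (hb : dist b o = ρ) (hbl : b ≠ l) (hbm : b ≠ m)
    (ha : dist a o ≤ ρ) (hc : dist c o ≤ ρ) (hab : a ≠ b) (hcb : c ≠ b)
    (hopp₁ : ⟪a - b, J (l - b)⟫ * ⟪m - b, J (l - b)⟫ ≤ 0)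
    (hopp₂ : ⟪c - b, J (m - b)⟫ * ⟪l - b, J (m - b)⟫ ≤ 0) :
    Real.pi / 2 ≤ EuclideanGeometry.angle a b c ∧
      EuclideanGeometry.angle a b c < Real.pi := by
  subst ho hρ
  have hpq : ⟪l - b, m - b⟫ = 0 := by
    rw [← inner_neg_neg, neg_sub, neg_sub]
    exact real_inner_sub_sub_eq_zero_of_dist_midpoint_eq hb
  have hp : l - b ≠ 0 := sub_ne_zero.2 hbl.symm
  have hq : m - b ≠ 0 := sub_ne_zero.2 hbm.symm
  have hu := real_inner_self_le_of_dist_midpoint_le hb ha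
  have hv := real_inner_self_le_of_dist_midpoint_le hb hc
  have hu0 : 0 < ⟪a - b, a - b⟫ := real_inner_self_pos.2 (sub_ne_zero.2 hab)
  have hv0 : 0 < ⟪c - b, c - b⟫ := real_inner_self_pos.2 (sub_ne_zero.2 hcb)
  have huq := real_inner_nonpos_of_inner_J_mul_inner_J_nonpos hpq hp hopp₁
  have hvp := real_inner_nonpos_of_inner_J_mul_inner_J_nonpos (by rwa [real_inner_comm]) hq hopp₂
  have huv := real_inner_nonpos_of_mem_opposite_quadrants hpq hp hq (by linarith) huq hvp
    (by linarith)
  rw [EuclideanGeometry.angle, vsub_eq_sub, vsub_eq_sub]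
  refine ⟨pi_div_two_le_angle_of_real_inner_nonpos huv,
    angle_lt_pi_of_real_inner_pos (w := (l - b) + (m - b)) ?_ ?_⟩ <;>
  · rw [inner_add_right]; linarith

/-- Angle bound for three consecutive points `a ≺ b ≺ c` of a link, where `b` is the
apex of a `P`-free quadrant supported by the points `l` and `m`: the angle at `b`
satisfies `π/2 ≤ ∠abc < π`. -/
theorem link_angle_bound (l m a b c : Plane) (hlm : l ≠ m)
    (o : Plane) (ho : o = midpoint ℝ l m) (ρ : ℝ) (hρ : ρ = dist l m / 2)
    (hb : dist b o = ρ) (hbl : b ≠ l) (hbm : b ≠ m)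
    (ha : dist a o ≤ ρ) (hc : dist c o ≤ ρ) (hab : a ≠ b) (hcb : c ≠ b)
    (hopp₁ : ⟪a - b, J (l - b)⟫ * ⟪m - b, J (l - b)⟫ ≤ 0)
    (hopp₂ : ⟪c - b, J (m - b)⟫ * ⟪l - b, J (m - b)⟫ ≤ 0) :
    Real.pi / 2 ≤ EuclideanGeometry.angle a b c ∧
      EuclideanGeometry.angle a b c < Real.pi :=
  link_angle_bound_general l m a b c o ho ρ hρ hb hbl hbm ha hc hab hcb hopp₁ hopp₂
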